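/- arXiv:1711.09341 — 2 statements merged into one kernel-verified Lean document; each statement's English description precedes it below -/
import Mathlib

section
/- Let f be a circuit injection from a 3-connected graph G onto a graph G' (i.e., f is an injective map on edges, surjective onto the edges of G', such that the image of every circuit of G is a circuit of G', and G' has no isolated vertices). Then for every vertex v of G, the image f(S(v)) of the star of v is either the star S(w) of some vertex w of G', or an independent (pairwise nonadjacent) set of edges of G'. -/
open SimpleGraph

universe u v

/-- A circuit of `G` is the edge set of a cycle of `G`. -/
def IsCircuit {V : Type u} (G : SimpleGraph V) (C : Set (Sym2 V)) : Prop :=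
  ∃ (x : V) (w : G.Walk x x), w.IsCycle ∧ C = {e | e ∈ w.edges}

/-- The set of vertices covered by a set of edges. -/
def circVerts {V : Type u} (C : Set (Sym2 V)) : Set V :=
  {x | ∃ e ∈ C, x ∈ e}

/-- A set of edges is independent if its edges are pairwise nonadjacent. -/
def IndepEdges {V : Type u} (A : Set (Sym2 V)) : Prop :=
  ∀ e₁ ∈ A, ∀ e₂ ∈ A, e₁ ≠ e₂ → ∀ x : V, x ∈ e₁ → x ∉ e₂

/-- 2-connected: connected, at least 3 vertices, and deleting any one vertex
leaves the graph connected. -/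
def TwoConnected {V : Type u} (G : SimpleGraph V) : Prop :=
  G.Connected ∧ (3 : Cardinal) ≤ Cardinal.mk V ∧
    ∀ x : V, (G.induce {x}ᶜ).Connected

/-- 3-connected: at least 4 vertices and deleting any two vertices leaves
the graph connected. -/
def ThreeConnected {V : Type u} (G : SimpleGraph V) : Prop :=
  (4 : Cardinal) ≤ Cardinal.mk V ∧
    ∀ x y : V, (G.induce ({x, y} : Set V)ᶜ).Connected

/-- k-connected: more than k vertices and deleting any set of fewer than k
vertices leaves the graph connected. -/
def KConnected {V : Type u} (k : ℕ) (G : SimpleGraph V) : Prop :=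
  (k : Cardinal) < Cardinal.mk V ∧
    ∀ s : Set V, s.Finite → Nat.card s < k → (G.induce sᶜ).Connected

/-- The image of a set of edges of `G` under an edge map `f`. -/
def mapEdges {V : Type u} {V' : Type v} (G : SimpleGraph V) (G' : SimpleGraph V')
    (f : G.edgeSet → G'.edgeSet) (C : Set (Sym2 V)) : Set (Sym2 V') :=
  {e' | ∃ e : G.edgeSet, (e : Sym2 V) ∈ C ∧ (f e : Sym2 V') = e'}

/-- The preimage of a set of edges of `G'` under an edge map `f`. -/
def preimEdges {V : Type u} {V' : Type v} (G : SimpleGraph V) (G' : SimpleGraph V')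
    (f : G.edgeSet → G'.edgeSet) (S : Set (Sym2 V')) : Set (Sym2 V) :=
  {e | ∃ he : e ∈ G.edgeSet, (f ⟨e, he⟩ : Sym2 V') ∈ S}

/-- A circuit injection from `G` onto `G'`: an injective, surjective map on
edges carrying every circuit of `G` to a circuit of `G'`, where `G'` has no
isolated vertices. -/
def IsCircuitInjection {V : Type u} {V' : Type v} (G : SimpleGraph V) (G' : SimpleGraph V')
    (f : G.edgeSet → G'.edgeSet) : Prop :=
  Function.Injective f ∧ Function.Surjective f ∧
    (∀ C : Set (Sym2 V), IsCircuit G C → IsCircuit G' (mapEdges G G' f C)) ∧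
    ∀ x : V', ∃ y : V', G'.Adj x y

/-- `G` contains a subgraph of type X with connectors `e₁`, `e₂`, `e₃`:
two vertex-disjoint circuits `CA`, `CB`, edges `e₁ = (a₁,b₁)`, `e₂ = (a₂,b₂)`,
and a path from `a₃` to `b₃` internally disjoint from both circuits, with
`a₁,a₂,a₃` distinct on `CA` and `b₁,b₂,b₃` distinct on `CB`, and `e₃` an edge
of the path. -/
def IsTypeXWith {V : Type u} (G : SimpleGraph V) (e₁ e₂ e₃ : Sym2 V) : Prop :=
  ∃ (a₁ a₂ a₃ b₁ b₂ b₃ : V) (CA CB : Set (Sym2 V)) (P : G.Walk a₃ b₃),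
    IsCircuit G CA ∧ IsCircuit G CB ∧
    Disjoint (circVerts CA) (circVerts CB) ∧
    a₁ ∈ circVerts CA ∧ a₂ ∈ circVerts CA ∧ a₃ ∈ circVerts CA ∧
    b₁ ∈ circVerts CB ∧ b₂ ∈ circVerts CB ∧ b₃ ∈ circVerts CB ∧
    a₁ ≠ a₂ ∧ a₁ ≠ a₃ ∧ a₂ ≠ a₃ ∧ b₁ ≠ b₂ ∧ b₁ ≠ b₃ ∧ b₂ ≠ b₃ ∧
    G.Adj a₁ b₁ ∧ G.Adj a₂ b₂ ∧ e₁ = s(a₁, b₁) ∧ e₂ = s(a₂, b₂) ∧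
    P.IsPath ∧
    (∀ x ∈ P.support, x ≠ a₃ → x ≠ b₃ → x ∉ circVerts CA ∪ circVerts CB) ∧
    e₃ ∈ P.edges

/-- `G` is (all of) a graph of type X with connectors `e₁`, `e₂`, `e₃`. -/
def IsTypeXGraph {V : Type u} (G : SimpleGraph V) (e₁ e₂ e₃ : Sym2 V) : Prop :=
  ∃ (a₁ a₂ a₃ b₁ b₂ b₃ : V) (CA CB : Set (Sym2 V)) (P : G.Walk a₃ b₃),
    IsCircuit G CA ∧ IsCircuit G CB ∧
    Disjoint (circVerts CA) (circVerts CB) ∧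
    a₁ ∈ circVerts CA ∧ a₂ ∈ circVerts CA ∧ a₃ ∈ circVerts CA ∧
    b₁ ∈ circVerts CB ∧ b₂ ∈ circVerts CB ∧ b₃ ∈ circVerts CB ∧
    a₁ ≠ a₂ ∧ a₁ ≠ a₃ ∧ a₂ ≠ a₃ ∧ b₁ ≠ b₂ ∧ b₁ ≠ b₃ ∧ b₂ ≠ b₃ ∧
    G.Adj a₁ b₁ ∧ G.Adj a₂ b₂ ∧ e₁ = s(a₁, b₁) ∧ e₂ = s(a₂, b₂) ∧
    P.IsPath ∧
    (∀ x ∈ P.support, x ≠ a₃ → x ≠ b₃ → x ∉ circVerts CA ∪ circVerts CB) ∧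
    e₃ ∈ P.edges ∧
    G.edgeSet = CA ∪ CB ∪ {e₁, e₂} ∪ {e | e ∈ P.edges}


/-!
Suppose the images of two edges `e₁, e₂` at `x` share a vertex `w`. As `f` maps cycles to cycles
and a cycle has exactly two edges at each of its vertices, every cycle of `G` has either none or
exactly two edges whose images contain `w`. In a 3-connected graph, `e₁`, `e₂` and any edge
avoiding `x` lie on a common cycle, so no edge avoiding `x` has its image at `w`. Any other edge
`e` at `x` lies with `e₁` on a cycle whose only edges at `x` are `e₁` and `e`; the second edge of
that cycle with image at `w` is incident to `x`, hence is `e`. Thus the edges with image at `w`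
are exactly the star of `x`.

The common cycle comes from a Whitney-type lemma (in a 2-connected graph every vertex and every
edge lie on a cycle), applied to `x` and the edge after deleting all edges at `x` but `e₁, e₂`.
-/

namespace SimpleGraph

variable {V : Type u} {G : SimpleGraph V}

lemma exists_isPath_of_connected_induce {s : Set V} (h : (G.induce s).Connected) {a b : V}
    (ha : a ∈ s) (hb : b ∈ s) : ∃ p : G.Walk a b, p.IsPath ∧ ∀ z ∈ p.support, z ∈ s := by
  classical
  obtain ⟨p⟩ := h.preconnected ⟨a, ha⟩ ⟨b, hb⟩
  refine ⟨(p.map (Embedding.induce s).toHom).bypass, Walk.bypass_isPath _, fun z hz => ?_⟩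
  obtain ⟨⟨z, hzs⟩, -, rfl⟩ := List.mem_map.mp
    (Walk.support_map _ p ▸ (Walk.support_bypass_subset_support _ hz))
  exact hzs

lemma reachable_deleteEdges_of_connected_induce {z a b : V} {e : Sym2 V}
    (hGz : (G.induce {z}ᶜ).Connected) (hz : z ∈ e) (ha : a ≠ z) (hb : b ≠ z) :
    (G.deleteEdges {e}).Reachable a b := by
  let φ : G.induce {z}ᶜ →g G.deleteEdges {e} :=
    ⟨Subtype.val, fun {c d} hcd => by
      refine deleteEdges_adj.mpr ⟨hcd, fun h => ?_⟩
      rcases Sym2.mem_iff.mp ((Set.mem_singleton_iff.mp h) ▸ hz) with h | h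
      · exact c.2 h.symm
      · exact d.2 h.symm⟩
  exact (hGz.preconnected ⟨a, ha⟩ ⟨b, hb⟩).map φ

namespace Walk

lemma IsPath.start_notMem_support_tail {a b : V} {p : G.Walk a b} (hp : p.IsPath) :
    a ∉ p.support.tail := by
  have := hp.support_nodup
  rw [← cons_tail_support] at this
  exact (List.nodup_cons.mp this).1

lemma exists_prefix_first_mem {S : Set V} {a b : V} (p : G.Walk a b) (hb : b ∈ S) :
    ∃ c ∈ S, ∃ (q : G.Walk a c) (r : G.Walk c b), q.append r = p ∧
      ∀ z ∈ q.support, z ∈ S → z = c := by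
  induction p with
  | nil => exact ⟨_, hb, nil, nil, rfl, by simp⟩
  | @cons a d b h p ih =>
    by_cases ha : a ∈ S
    · exact ⟨a, ha, nil, cons h p, rfl, by simp⟩
    · obtain ⟨c, hc, q, r, rfl, hq⟩ := ih hb
      refine ⟨c, hc, cons h q, r, rfl, ?_⟩
      rintro z hz hzS
      rcases List.mem_cons.mp (support_cons h q ▸ hz) with rfl | hz
      · exact absurd hzS ha
      · exact hq z hz hzS

lemma IsPath.isCycle_append_of_inter {p q : V} {P : G.Walk p q} {Q : G.Walk q p}
    (hP : P.IsPath) (hQ : Q.IsPath) (hPQ : ∀ z ∈ P.support, z ∈ Q.support → z = p ∨ z = q)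
    (hlen : 1 < P.length ∨ 1 < Q.length) : (P.append Q).IsCycle := by
  refine hP.isCycle_append hQ (fun z hzP hzQ => ?_) hlen
  rcases hPQ z (List.mem_of_mem_tail hzP) (List.mem_of_mem_tail hzQ) with rfl | rfl
  · exact hP.start_notMem_support_tail hzP
  · exact hQ.start_notMem_support_tail hzQ

lemma IsCycle.exists_edges_mem_iff {c w : V} {C : G.Walk c c} (hC : C.IsCycle)
    (hw : w ∈ C.support) :
    ∃ e₁ e₂, e₁ ≠ e₂ ∧ ∀ e, e ∈ C.edges ∧ w ∈ e ↔ e = e₁ ∨ e = e₂ := by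
  obtain ⟨n₁, n₂, hne, hN⟩ := Set.ncard_eq_two.mp (hC.ncard_neighborSet_toSubgraph_eq_two hw)
  have hadj : ∀ n, s(w, n) ∈ C.edges ↔ n = n₁ ∨ n = n₂ := fun n => by
    rw [← adj_toSubgraph_iff_mem_edges, ← Subgraph.mem_neighborSet, hN]
    simp
  refine ⟨s(w, n₁), s(w, n₂), fun h => hne (Sym2.congr_right.mp h), fun e => ?_⟩
  constructor
  · rintro ⟨he, hwe⟩
    obtain ⟨n, rfl⟩ := Sym2.mem_iff_exists.mp hwe
    rcases (hadj n).mp he with rfl | rfl <;> simp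
  · rintro (rfl | rfl) <;> simp [hadj]

lemma IsCycle.eq_or_eq_of_mem_edges {c w : V} {C : G.Walk c c} (hC : C.IsCycle)
    {e e' e'' : Sym2 V} (he : e ∈ C.edges) (he' : e' ∈ C.edges) (he'' : e'' ∈ C.edges)
    (hw : w ∈ e) (hw' : w ∈ e') (hw'' : w ∈ e'') (hne : e ≠ e') : e'' = e ∨ e'' = e' := by
  obtain ⟨e₁, e₂, -, h⟩ := hC.exists_edges_mem_iff (C.mem_support_of_mem_edges he hw)
  have := (h e).mp ⟨he, hw⟩
  have := (h e').mp ⟨he', hw'⟩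
  have := (h e'').mp ⟨he'', hw''⟩
  grind

lemma IsCycle.exists_ne_mem_edges {c w : V} {C : G.Walk c c} (hC : C.IsCycle) {e : Sym2 V}
    (he : e ∈ C.edges) (hw : w ∈ e) : ∃ e' ∈ C.edges, w ∈ e' ∧ e' ≠ e := by
  obtain ⟨e₁, e₂, hne, h⟩ := hC.exists_edges_mem_iff (C.mem_support_of_mem_edges he hw)
  rcases (h e).mp ⟨he, hw⟩ with rfl | rfl
  · exact ⟨e₂, ((h e₂).mpr (.inr rfl)).1, ((h e₂).mpr (.inr rfl)).2, hne.symm⟩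
  · exact ⟨e₁, ((h e₁).mpr (.inl rfl)).1, ((h e₁).mpr (.inl rfl)).2, hne⟩

lemma IsCycle.exists_ne_mem_support {c x : V} {C : G.Walk c c} (hC : C.IsCycle)
    (hx : x ∈ C.support) : ∃ y ∈ C.support, y ≠ x := by
  obtain ⟨e, _, -, h⟩ := hC.exists_edges_mem_iff hx
  obtain ⟨he, hxe⟩ := (h e).mpr (.inl rfl)
  obtain ⟨y, rfl⟩ := Sym2.mem_iff_exists.mp hxe
  exact ⟨y, C.snd_mem_support_of_mem_edges he, (C.adj_of_mem_edges he).ne.symm⟩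

lemma IsCycle.exists_arc {c p q a : V} {C : G.Walk c c} (hC : C.IsCycle) (hp : p ∈ C.support)
    (hq : q ∈ C.support) (hpq : p ≠ q) (ha : a ∈ C.support) :
    ∃ Q : G.Walk q p, Q.IsPath ∧ a ∈ Q.support ∧ Q.support ⊆ C.support ∧ Q.edges ⊆ C.edges := by
  classical
  have hsupp : (C.rotate p hp).support ⊆ C.support := fun z hz => by simpa using hz
  have hedges : (C.rotate p hp).edges ⊆ C.edges := fun e he => (rotate_edges C p hp).perm.subset he
  have hq' : q ∈ (C.rotate p hp).support := by simpa using hq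
  have hspec := (C.rotate p hp).take_spec hq'
  have hcyc := hC.rotate hp
  rw [← hspec] at hcyc
  have hA := hcyc.isPath_of_append_left (not_nil_of_ne hpq.symm)
  have hB := hcyc.isPath_of_append_right (not_nil_of_ne hpq)
  have ha' : a ∈ (C.rotate p hp).support := by simpa using ha
  rw [← hspec, mem_support_append_iff] at ha'
  rcases ha' with haA | haB
  · refine ⟨_, hA.reverse, by simpa using haA, fun z hz => hsupp ?_, fun e he => hedges ?_⟩
    · exact support_takeUntil_subset_support _ hq' (by simpa using hz)
    · exact edges_takeUntil_subset_edges _ hq' (by simpa using he)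
  · exact ⟨_, hB, haB, fun z hz => hsupp (support_dropUntil_subset_support _ hq' hz),
      fun e he => hedges (edges_dropUntil_subset_edges _ hq' he)⟩

/-- The hypothesis `hlen` excludes closing a single edge `pq` of `C` with the arc `pq` itself. -/
lemma IsCycle.exists_isCycle_of_ear {c p q a : V} {C : G.Walk c c} (hC : C.IsCycle)
    (ha : a ∈ C.support) (hp : p ∈ C.support) (hq : q ∈ C.support) (hpq : p ≠ q)
    {P : G.Walk p q} (hP : P.IsPath) (hPC : ∀ z ∈ P.support, z ∈ C.support → z = p ∨ z = q)
    (hlen : 1 < P.length ∨ s(p, q) ∉ C.edges) :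
    ∃ D : G.Walk p p, D.IsCycle ∧ a ∈ D.support ∧ P.edges ⊆ D.edges := by
  obtain ⟨Q, hQ, haQ, hQsupp, hQedges⟩ := hC.exists_arc hp hq hpq ha
  refine ⟨P.append Q, hP.isCycle_append_of_inter hQ (fun z hzP hzQ => hPC z hzP (hQsupp hzQ))
    ?_, by simp [haQ], by simp⟩
  refine hlen.imp_right fun hpqC => ?_
  cases Q with
  | nil => exact absurd rfl hpq
  | cons h Q =>
    cases Q with
    | nil => exact absurd (hQedges (by simp [Sym2.eq_swap])) hpqC
    | cons => simp

/-- A path from `y` back to `C` in `G - x`, prefixed by the edge `xy`, is an ear of `C`; close it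
with the arc of `C` through `a`. -/
lemma IsCycle.exists_isCycle_mem_edges {c a x y : V} {C : G.Walk c c} (hC : C.IsCycle)
    (hGx : (G.induce {x}ᶜ).Connected) (ha : a ∈ C.support) (hx : x ∈ C.support)
    (hxy : G.Adj x y) (hxyC : s(x, y) ∉ C.edges) :
    ∃ (u : V) (D : G.Walk u u), D.IsCycle ∧ a ∈ D.support ∧ s(x, y) ∈ D.edges := by
  suffices ∃ (b : V) (P : G.Walk x b), b ∈ C.support ∧ b ≠ x ∧ P.IsPath ∧ s(x, y) ∈ P.edges ∧
      (∀ z ∈ P.support, z ∈ C.support → z = x ∨ z = b) ∧ (1 < P.length ∨ s(x, b) ∉ C.edges) by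
    obtain ⟨b, P, hb, hbx, hP, hxyP, hPC, hlen⟩ := this
    obtain ⟨D, hD, haD, hPD⟩ := hC.exists_isCycle_of_ear ha hx hb hbx.symm hP hPC hlen
    exact ⟨x, D, hD, haD, hPD hxyP⟩
  by_cases hyC : y ∈ C.support
  · exact ⟨y, hxy.toWalk, hyC, hxy.ne.symm, hxy.isPath_toWalk, by simp,
      fun z hz _ => by simpa using hz, .inr hxyC⟩
  obtain ⟨c', hc', hc'x⟩ := hC.exists_ne_mem_support hx
  obtain ⟨R, hR, hRx⟩ := exists_isPath_of_connected_induce hGx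
    (show y ∈ ({x}ᶜ : Set V) by simpa using hxy.ne.symm) (show c' ∈ ({x}ᶜ : Set V) by simpa)
  obtain ⟨b, hb, R₁, R₂, rfl, hR₁⟩ := R.exists_prefix_first_mem (S := {z | z ∈ C.support}) hc'
  have hxR₁ : x ∉ R₁.support := fun h => hRx x (by simp [mem_support_append_iff, h]) rfl
  refine ⟨b, cons hxy R₁, hb, fun h => hxR₁ (h ▸ R₁.end_mem_support), hR.of_append_left.cons hxR₁,
    by simp, fun z hz hzC => ?_, .inl ?_⟩
  · rcases List.mem_cons.mp (support_cons hxy R₁ ▸ hz) with rfl | hz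
    · exact .inl rfl
    · exact .inr (hR₁ z hz hzC)
  · have : 0 < R₁.length := not_nil_iff_lt_length.mp (not_nil_of_ne fun h => hyC (h ▸ hb))
    simp only [length_cons]
    omega

end Walk

lemma exists_isCycle_mem_edges_of_connected_induce {v : V} (hGv : (G.induce {v}ᶜ).Connected)
    {e₁ e₂ : Sym2 V} (he₁ : e₁ ∈ G.incidenceSet v) (he₂ : e₂ ∈ G.incidenceSet v) (hne : e₁ ≠ e₂) :
    ∃ (u : V) (C : G.Walk u u), C.IsCycle ∧ e₁ ∈ C.edges ∧ e₂ ∈ C.edges := by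
  obtain ⟨u₁, rfl⟩ := Sym2.mem_iff_exists.mp he₁.2
  obtain ⟨u₂, rfl⟩ := Sym2.mem_iff_exists.mp he₂.2
  have h₁ : G.Adj v u₁ := he₁.1
  have h₂ : G.Adj v u₂ := he₂.1
  obtain ⟨P, hP, hPv⟩ := exists_isPath_of_connected_induce hGv
    (show u₁ ∈ ({v}ᶜ : Set V) by simpa using h₁.ne.symm)
    (show u₂ ∈ ({v}ᶜ : Set V) by simpa using h₂.ne.symm)
  have hvP : v ∉ P.support := fun h => hPv v h rfl
  refine ⟨v, (Walk.cons h₁ P).append h₂.symm.toWalk, ?_, by simp, by simp [Sym2.eq_swap]⟩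
  refine (hP.cons hvP).isCycle_append_of_inter h₂.symm.isPath_toWalk (fun z _ hz => ?_) (.inl ?_)
  · simp only [Adj.toWalk, Walk.support_cons, Walk.support_nil, List.mem_cons, List.not_mem_nil,
      or_false] at hz
    exact hz.symm
  · have : 0 < P.length :=
      Walk.not_nil_iff_lt_length.mp (Walk.not_nil_of_ne fun h => hne (congrArg _ h))
    simp only [Walk.length_cons]
    omega

lemma exists_ne_ne_of_three_le (h : (3 : Cardinal) ≤ Cardinal.mk V) (a b : V) :
    ∃ t : V, t ≠ a ∧ t ≠ b := by
  by_contra! h'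
  have hsub : Set.univ ⊆ ({a, b} : Set V) := fun t _ => or_iff_not_imp_left.mpr (h' t)
  have := h.trans <| Cardinal.mk_univ.symm.le.trans <|
    (Cardinal.mk_le_mk_of_subset hsub).trans Cardinal.mk_insert_le
  rw [Cardinal.mk_singleton] at this
  norm_num at this

lemma connected_of_forall_connected_induce (hdel : ∀ t, (G.induce {t}ᶜ).Connected)
    (h3 : (3 : Cardinal) ≤ Cardinal.mk V) : G.Connected := by
  have : Nonempty V := Cardinal.mk_ne_zero_iff.mp (ne_of_gt (lt_of_lt_of_le (by norm_num) h3))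
  refine ⟨fun a b => ?_⟩
  obtain ⟨t, hta, htb⟩ := exists_ne_ne_of_three_le h3 a b
  exact ((hdel t).preconnected ⟨a, hta.symm⟩ ⟨b, htb.symm⟩).map (Embedding.induce _).toHom

lemma exists_isCycle_mem_edges_of_adj (hdel : ∀ t, (G.induce {t}ᶜ).Connected)
    (h3 : (3 : Cardinal) ≤ Cardinal.mk V) {x y : V} (hxy : G.Adj x y) :
    ∃ (u : V) (C : G.Walk u u), C.IsCycle ∧ s(x, y) ∈ C.edges := by
  obtain ⟨t, htx, hty⟩ := exists_ne_ne_of_three_le h3 x y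
  refine adj_and_reachable_delete_edges_iff_exists_cycle.mp ⟨hxy, ?_⟩
  exact (reachable_deleteEdges_of_connected_induce (hdel y) (by simp) hxy.ne hty).trans
    (reachable_deleteEdges_of_connected_induce (hdel x) (by simp) htx hxy.ne.symm)

end SimpleGraph

section Connectivity

variable {V : Type u} {G : SimpleGraph V}

/-- Induction along a walk from `x` to `a`, rerouting the cycle at each step by
`Walk.IsCycle.exists_isCycle_mem_edges`. -/
theorem TwoConnected.exists_isCycle (hG : TwoConnected G) (a : V) {x y : V} (hxy : G.Adj x y) :
    ∃ (u : V) (C : G.Walk u u), C.IsCycle ∧ a ∈ C.support ∧ s(x, y) ∈ C.edges := by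
  obtain ⟨hconn, h3, hdel⟩ := hG
  obtain ⟨p⟩ := hconn.preconnected x a
  induction p generalizing y with
  | nil =>
    obtain ⟨u, C, hC, he⟩ := exists_isCycle_mem_edges_of_adj hdel h3 hxy
    exact ⟨u, C, hC, C.fst_mem_support_of_mem_edges he, he⟩
  | @cons x z _ hxz _ ih =>
    obtain ⟨u, C, hC, haC, hzxC⟩ := ih hxz.symm
    by_cases hxyC : s(x, y) ∈ C.edges
    · exact ⟨u, C, hC, haC, hxyC⟩
    · exact hC.exists_isCycle_mem_edges (hdel x) haC (C.snd_mem_support_of_mem_edges hzxC) hxy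
        hxyC

lemma ThreeConnected.connected_induce_compl_singleton (hG : ThreeConnected G) (t : V) :
    (G.induce {t}ᶜ).Connected := by
  have := hG.2 t t
  rwa [Set.pair_eq_singleton] at this

lemma ThreeConnected.twoConnected_deleteEdges (hG : ThreeConnected G) {v u₁ u₂ : V}
    (h₁ : G.Adj v u₁) (h₂ : G.Adj v u₂) (hne : u₁ ≠ u₂) :
    TwoConnected (G.deleteEdges (G.incidenceSet v \ {s(v, u₁), s(v, u₂)})) := by
  set H := G.deleteEdges (G.incidenceSet v \ {s(v, u₁), s(v, u₂)})
  have hle : ∀ s : Set V, v ∉ s → G.induce s ≤ H.induce s := fun s hs a b hab =>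
    deleteEdges_adj.mpr ⟨hab, fun h => hs (by rcases Sym2.mem_iff.mp h.1.2 with h | h <;>
      [exact h ▸ a.2; exact h ▸ b.2])⟩
  have hH : ∀ {u}, G.Adj v u → u = u₁ ∨ u = u₂ → H.Adj v u := fun hu h =>
    deleteEdges_adj.mpr ⟨hu, fun h' => h'.2 (by rcases h with rfl | rfl <;> simp)⟩
  have h3 : (3 : Cardinal) ≤ Cardinal.mk V := le_trans (by norm_num) hG.1
  have hdel : ∀ t, (H.induce {t}ᶜ).Connected := by
    intro t
    by_cases htv : t = v
    · subst htv
      exact (hG.connected_induce_compl_singleton t).mono (hle _ (by simp))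
    obtain ⟨w, hvw, hwt⟩ : ∃ w, H.Adj v w ∧ w ≠ t := by
      by_cases h₁t : u₁ = t
      · exact ⟨u₂, hH h₂ (.inr rfl), fun h => hne (h₁t.trans h.symm)⟩
      · exact ⟨u₁, hH h₁ (.inl rfl), h₁t⟩
    have hw : w ∈ ({v, t} : Set V)ᶜ := by simp [hvw.ne.symm, hwt]
    have := connected_induce_union (((hG.2 v t).mono (hle _ (by simp))).preconnected)
      (by simp [preconnected_top]) hw (Set.mem_singleton v) hvw.symm
    have hset : ({t}ᶜ : Set V) = {v, t}ᶜ ∪ {v} := by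
      ext z
      by_cases hz : z = v <;> simp [hz, Ne.symm htv]
    rwa [hset]
  exact ⟨connected_of_forall_connected_induce hdel h3, h3, hdel⟩

/-- Apply `TwoConnected.exists_isCycle` to `v` and `e` in the graph where `e₁, e₂` are the only
edges left at `v`. -/
theorem ThreeConnected.exists_isCycle_mem_edges (hG : ThreeConnected G) {v : V}
    {e₁ e₂ e : Sym2 V} (he₁ : e₁ ∈ G.incidenceSet v) (he₂ : e₂ ∈ G.incidenceSet v)
    (hne : e₁ ≠ e₂) (he : e ∈ G.edgeSet) (hve : v ∉ e) :
    ∃ (u : V) (C : G.Walk u u), C.IsCycle ∧ e₁ ∈ C.edges ∧ e₂ ∈ C.edges ∧ e ∈ C.edges := by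
  obtain ⟨u₁, rfl⟩ := Sym2.mem_iff_exists.mp he₁.2
  obtain ⟨u₂, rfl⟩ := Sym2.mem_iff_exists.mp he₂.2
  have hH := hG.twoConnected_deleteEdges he₁.1 he₂.1 (fun h => hne (congrArg _ h))
  induction e with | h x y =>
  obtain ⟨u, D, hD, hvD, hxyD⟩ := hH.exists_isCycle v (deleteEdges_adj.mpr ⟨he, fun h => hve h.1.2⟩)
  obtain ⟨d₁, d₂, hd, hDv⟩ := hD.exists_edges_mem_iff hvD
  have hstar : ∀ d, d ∈ D.edges ∧ v ∈ d → d = s(v, u₁) ∨ d = s(v, u₂) := by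
    rintro d ⟨hdD, hvd⟩
    have := (edgeSet_deleteEdges _ ▸ D.edges_subset_edgeSet hdD :
      d ∈ G.edgeSet \ (G.incidenceSet v \ {s(v, u₁), s(v, u₂)}))
    exact or_iff_not_imp_left.mpr (by simpa [incidenceSet, this.1, hvd] using this.2)
  have h₁ := hstar d₁ ((hDv d₁).mpr (.inl rfl))
  have h₂ := hstar d₂ ((hDv d₂).mpr (.inr rfl))
  refine ⟨u, D.mapLe (deleteEdges_le _), hD.mapLe _, ?_⟩
  simp only [Walk.edges_mapLe_eq_edges]
  refine ⟨((hDv _).mpr ?_).1, ((hDv _).mpr ?_).1, hxyD⟩ <;> grind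

end Connectivity

section CircuitInjection

variable {V : Type u} {V' : Type v} {G : SimpleGraph V} {G' : SimpleGraph V'}
  {f : G.edgeSet → G'.edgeSet}

lemma exists_isCycle_mem_edges_iff_image
    (hcirc : ∀ C, IsCircuit G C → IsCircuit G' (mapEdges G G' f C)) {c : V} {C : G.Walk c c}
    (hC : C.IsCycle) :
    ∃ (c' : V') (C' : G'.Walk c' c'), C'.IsCycle ∧
      ∀ g, g ∈ C'.edges ↔ ∃ e : G.edgeSet, (e : Sym2 V) ∈ C.edges ∧ (f e : Sym2 V') = g := by
  obtain ⟨c', C', hC', h⟩ := hcirc _ ⟨c, C, hC, rfl⟩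
  exact ⟨c', C', hC', fun g => (Set.ext_iff.mp h g).symm⟩

lemma eq_or_eq_of_mem_edges_comap (hinj : Function.Injective f)
    (hcirc : ∀ C, IsCircuit G C → IsCircuit G' (mapEdges G G' f C)) {c : V} {C : G.Walk c c}
    (hC : C.IsCycle) {w : V'} {e e' e'' : G.edgeSet} (he : (e : Sym2 V) ∈ C.edges)
    (he' : (e' : Sym2 V) ∈ C.edges) (he'' : (e'' : Sym2 V) ∈ C.edges)
    (hw : w ∈ (f e : Sym2 V')) (hw' : w ∈ (f e' : Sym2 V')) (hw'' : w ∈ (f e'' : Sym2 V'))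
    (hne : e ≠ e') : e'' = e ∨ e'' = e' := by
  obtain ⟨c', C', hC', hedges⟩ := exists_isCycle_mem_edges_iff_image hcirc hC
  have hmem : ∀ {d : G.edgeSet}, (d : Sym2 V) ∈ C.edges → (f d : Sym2 V') ∈ C'.edges :=
    fun hd => (hedges _).mpr ⟨_, hd, rfl⟩
  have hfinj : ∀ {d d' : G.edgeSet}, (f d : Sym2 V') = f d' → d = d' :=
    fun h => hinj (Subtype.ext h)
  exact (hC'.eq_or_eq_of_mem_edges (hmem he) (hmem he') (hmem he'') hw hw' hw''
    fun h => hne (hfinj h)).imp hfinj hfinj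

lemma exists_ne_mem_edges_comap
    (hcirc : ∀ C, IsCircuit G C → IsCircuit G' (mapEdges G G' f C)) {c : V} {C : G.Walk c c}
    (hC : C.IsCycle) {w : V'} {e : G.edgeSet} (he : (e : Sym2 V) ∈ C.edges)
    (hw : w ∈ (f e : Sym2 V')) :
    ∃ e' : G.edgeSet, (e' : Sym2 V) ∈ C.edges ∧ w ∈ (f e' : Sym2 V') ∧ e' ≠ e := by
  obtain ⟨c', C', hC', hedges⟩ := exists_isCycle_mem_edges_iff_image hcirc hC
  obtain ⟨g, hg, hwg, hge⟩ := hC'.exists_ne_mem_edges ((hedges _).mpr ⟨e, he, rfl⟩) hw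
  obtain ⟨e', he', rfl⟩ := (hedges g).mp hg
  exact ⟨e', he', hwg, fun h => hge (h ▸ rfl)⟩

lemma ThreeConnected.mem_iff_mem_image (hG : ThreeConnected G) (hinj : Function.Injective f)
    (hcirc : ∀ C, IsCircuit G C → IsCircuit G' (mapEdges G G' f C)) {x : V} {w : V'}
    {e₁ e₂ : G.edgeSet} (hne : e₁ ≠ e₂) (hx₁ : x ∈ (e₁ : Sym2 V)) (hx₂ : x ∈ (e₂ : Sym2 V))
    (hw₁ : w ∈ (f e₁ : Sym2 V')) (hw₂ : w ∈ (f e₂ : Sym2 V')) (e : G.edgeSet) :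
    x ∈ (e : Sym2 V) ↔ w ∈ (f e : Sym2 V') := by
  have hback : ∀ e : G.edgeSet, w ∈ (f e : Sym2 V') → x ∈ (e : Sym2 V) := by
    intro e hw
    by_contra hxe
    obtain ⟨u, C, hC, h₁, h₂, h⟩ := hG.exists_isCycle_mem_edges ⟨e₁.2, hx₁⟩ ⟨e₂.2, hx₂⟩
      (fun h => hne (Subtype.ext h)) e.2 hxe
    rcases eq_or_eq_of_mem_edges_comap hinj hcirc hC h₁ h₂ h hw₁ hw₂ hw hne with rfl | rfl
    · exact hxe hx₁
    · exact hxe hx₂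
  refine ⟨fun hx => ?_, hback e⟩
  by_cases he : e = e₁
  · exact he ▸ hw₁
  have he' : (e₁ : Sym2 V) ≠ e := fun h => he (Subtype.ext h).symm
  obtain ⟨u, C, hC, h₁, h⟩ := exists_isCycle_mem_edges_of_connected_induce
    (hG.connected_induce_compl_singleton x) ⟨e₁.2, hx₁⟩ ⟨e.2, hx⟩ he'
  obtain ⟨e', he'C, hwe', hne'⟩ := exists_ne_mem_edges_comap hcirc hC h₁ hw₁
  rcases hC.eq_or_eq_of_mem_edges h₁ h he'C hx₁ hx (hback e' hwe') he' with h | h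
  · exact absurd (Subtype.ext h) hne'
  · exact Subtype.ext h ▸ hwe'

lemma mapEdges_incidenceSet_eq (hsurj : Function.Surjective f) {x : V} {w : V'}
    (h : ∀ e : G.edgeSet, x ∈ (e : Sym2 V) ↔ w ∈ (f e : Sym2 V')) :
    mapEdges G G' f (G.incidenceSet x) = G'.incidenceSet w := by
  ext g
  constructor
  · rintro ⟨e, he, rfl⟩
    exact ⟨(f e).2, (h e).mp he.2⟩
  · rintro ⟨hg, hwg⟩
    obtain ⟨e, he⟩ := hsurj ⟨g, hg⟩
    exact ⟨e, ⟨e.2, (h e).mpr (he ▸ hwg)⟩, congrArg Subtype.val he⟩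

end CircuitInjection

/-- Under a circuit injection from a 3-connected graph, the image
of every star is a star or an independent set of edges. -/
theorem statement2 {V : Type u} {V' : Type v} (G : SimpleGraph V) (G' : SimpleGraph V')
    (h3 : ThreeConnected G) (f : G.edgeSet → G'.edgeSet)
    (hf : IsCircuitInjection G G' f) (x : V) :
    (∃ w : V', mapEdges G G' f (G.incidenceSet x) = G'.incidenceSet w) ∨
      IndepEdges (mapEdges G G' f (G.incidenceSet x)) := by
  obtain ⟨hinj, hsurj, hcirc, -⟩ := hf
  by_cases hshared : ∃ (w : V') (e₁ e₂ : G.edgeSet), e₁ ≠ e₂ ∧ x ∈ (e₁ : Sym2 V) ∧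
      x ∈ (e₂ : Sym2 V) ∧ w ∈ (f e₁ : Sym2 V') ∧ w ∈ (f e₂ : Sym2 V')
  · obtain ⟨w, e₁, e₂, hne, hx₁, hx₂, hw₁, hw₂⟩ := hshared
    exact .inl ⟨w, mapEdges_incidenceSet_eq hsurj
      (h3.mem_iff_mem_image hinj hcirc hne hx₁ hx₂ hw₁ hw₂)⟩
  · refine .inr ?_
    rintro _ ⟨e₁, he₁, rfl⟩ _ ⟨e₂, he₂, rfl⟩ hne w hw₁ hw₂
    exact hshared ⟨w, e₁, e₂, fun h => hne (h ▸ rfl), he₁.2, he₂.2, hw₁, hw₂⟩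
end

section
/- Let f be a circuit injection from a 2-connected graph G onto a graph G', and let S = S(v) be the star of a vertex v of G' such that f^{-1}(S) is an independent set of edges of G. Then G − f^{-1}(S) (delete the edges of f^{-1}(S), keep all vertices) has exactly two connected components G₁ and G₂, and every edge of f^{-1}(S) has one endpoint in G₁ and one endpoint in G₂. -/
open SimpleGraph

universe u v

/-!
Let `A = f⁻¹(S(v))`. A cycle of `G'` uses either no edge or exactly two edges at `v`, and `f`
carries the edge set of a cycle of `G` injectively onto that of a cycle of `G'`; hence every cycle
of `G` contains either no edge or exactly two edges of `A`. The two ends of an edge of `A` therefore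
lie in different components of `G - A`: a path between them in `G - A` would close a cycle with
a single edge of `A`. Fix `xy ∈ A` and suppose a vertex `z` lies in a third component. In a
2-connected graph any two vertices lie on a common cycle; a cycle through `z` and `x` must cross
between their components along an edge of `A`, and likewise for `y` and `z`. Joining these two
edges and `xy` by paths inside the three components gives a cycle with three edges of `A`.
-/

namespace SimpleGraph

variable {V : Type u} {G : SimpleGraph V}

namespace Walk

lemma exists_walk_to_first_mem {S : Set V} {a b : V} (p : G.Walk a b) (hb : b ∈ S) :
    ∃ x ∈ S, ∃ q : G.Walk a x, q.support ⊆ p.support ∧ ∀ y ∈ q.support, y ∈ S → y = x := by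
  induction p with
  | nil => exact ⟨_, hb, nil, List.Subset.refl _, by simp⟩
  | @cons a c b h p ih =>
    by_cases ha : a ∈ S
    · exact ⟨a, ha, nil, by simp, by simp⟩
    · obtain ⟨x, hx, q, hqp, hqS⟩ := ih hb
      refine ⟨x, hx, cons h q, ?_, ?_⟩
      · simpa [support_cons] using List.cons_subset_cons a hqp
      · simp only [support_cons, List.mem_cons, forall_eq_or_imp]
        exact ⟨fun h => absurd h ha, hqS⟩

lemma isCycle_cons_append {a b c : V} {p : G.Walk a b} {q : G.Walk b c} (hp : p.IsPath)
    (hq : q.IsPath) (h : G.Adj c a) (hpq : ∀ y ∈ p.support, y ∈ q.support → y = b)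
    (ha : a ∉ q.support) (hc : c ∉ p.support) : (cons h (p.append q)).IsCycle := by
  refine (cons_isCycle_iff _ h).mpr ⟨?_, fun hca => ?_⟩
  · rw [isPath_def, support_append]
    refine hp.support_nodup.append hq.support_nodup.tail fun y hyp hyq => ?_
    rw [hpq y hyp (List.mem_of_mem_tail hyq)] at hyq
    exact (List.nodup_cons.mp (q.cons_tail_support ▸ hq.support_nodup)).1 hyq
  · rcases List.mem_append.mp (edges_append p q ▸ hca) with hca | hca
    · exact hc (p.fst_mem_support_of_mem_edges hca)
    · exact ha (q.snd_mem_support_of_mem_edges hca)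

lemma IsCycle.exists_isPath_mem_support {u x a s : V} {c : G.Walk u u}
    (hc : c.IsCycle) (hx : x ∈ c.support) (ha : a ∈ c.support) (hs : s ∈ c.support)
    (hxa : x ≠ a) :
    ∃ d : G.Walk x a, d.IsPath ∧ s ∈ d.support ∧ d.support ⊆ c.support := by
  classical
  set c' := c.rotate x hx
  have hc' : c'.IsCycle := hc.rotate hx
  have ha' : a ∈ c'.support := (c.mem_support_rotate_iff x hx).mpr ha
  have hsupp : c'.support ⊆ c.support := fun y => (c.mem_support_rotate_iff x hx).mp
  have hsplit := c'.take_spec ha'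
  have hs' : s ∈ (c'.takeUntil a ha').support ∨ s ∈ (c'.dropUntil a ha').support := by
    rw [← mem_support_append_iff, hsplit]
    exact (c.mem_support_rotate_iff x hx).mpr hs
  rcases hs' with hs' | hs'
  · exact ⟨_, hc'.isPath_takeUntil ha', hs',
      fun y hy => hsupp (c'.support_takeUntil_subset_support ha' hy)⟩
  · rw [← hsplit] at hc'
    refine ⟨_, (hc'.isPath_of_append_right (not_nil_of_ne hxa)).reverse, by simpa using hs',
      fun y hy => hsupp (c'.support_dropUntil_subset_support ha' (by simpa using hy))⟩

lemma IsPath.countP_mem_edges_end [DecidableEq V] {a v : V} {p : G.Walk a v} (hp : p.IsPath)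
    (hav : a ≠ v) :
    p.edges.countP (v ∈ ·) = 1 := by
  induction p with
  | nil => exact absurd rfl hav
  | @cons a c v h p ih =>
    rw [cons_isPath_iff] at hp
    by_cases hcv : c = v
    · subst hcv
      simp [(isPath_iff_nil.mp hp.1).eq_nil]
    · have hv : v ∉ s(a, c) := by simp [Ne.symm hav, Ne.symm hcv]
      simp [hv, ih hp.1 hcv]

lemma IsCycle.countP_mem_edges_eq_zero_or_two [DecidableEq V] {u : V} {c : G.Walk u u}
    (hc : c.IsCycle) (v : V) :
    c.edges.countP (v ∈ ·) = 0 ∨ c.edges.countP (v ∈ ·) = 2 := by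
  by_cases hv : v ∈ c.support
  · right
    rw [← (c.rotate_edges v hv).perm.countP_eq]
    have hc' := hc.rotate hv
    generalize c.rotate v hv = c' at hc'
    cases c' with
    | nil => exact absurd rfl hc'.ne_nil
    | cons h p =>
      have hp := ((cons_isCycle_iff _ h).mp hc').1
      simp [hp.countP_mem_edges_end h.ne']
  · left
    exact List.countP_eq_zero.mpr fun e he hve =>
      hv (mem_support_of_mem_edges he (by simpa using hve))

end Walk

section DeleteEdges

open Classical Walk

variable {A : Set (Sym2 V)}

def MeetsCyclesInZeroOrTwo (G : SimpleGraph V) (A : Set (Sym2 V)) : Prop :=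
  ∀ ⦃u : V⦄ (c : G.Walk u u), c.IsCycle →
    c.edges.countP (· ∈ A) = 0 ∨ c.edges.countP (· ∈ A) = 2

lemma Walk.reachable_deleteEdges_of_countP_eq_zero {a b : V} (p : G.Walk a b)
    (hp : p.edges.countP (· ∈ A) = 0) : (G.deleteEdges A).Reachable a b :=
  ⟨p.toDeleteEdges A fun e he heA => List.countP_eq_zero.mp hp e he (by simpa using heA)⟩

lemma Walk.exists_reachable_deleteEdges_of_countP_eq_one {a b : V} (p : G.Walk a b)
    (hp : p.edges.countP (· ∈ A) = 1) :
    ∃ x y, s(x, y) ∈ A ∧ (G.deleteEdges A).Reachable a x ∧ (G.deleteEdges A).Reachable y b := by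
  induction p with
  | nil => simp at hp
  | @cons a c b h p ih =>
    rw [edges_cons, List.countP_cons] at hp
    by_cases hac : s(a, c) ∈ A
    · exact ⟨a, c, hac, Reachable.rfl,
        p.reachable_deleteEdges_of_countP_eq_zero (by simpa [hac] using hp)⟩
    · obtain ⟨x, y, hxy, hcx, hyb⟩ := ih (by simpa [hac] using hp)
      exact ⟨x, y, hxy, (Adj.reachable (deleteEdges_adj.mpr ⟨h, hac⟩)).trans hcx, hyb⟩

lemma Reachable.exists_isPath_of_deleteEdges {a b : V} (h : (G.deleteEdges A).Reachable a b) :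
    ∃ p : G.Walk a b, p.IsPath ∧ p.edges.countP (· ∈ A) = 0 ∧
      ∀ y ∈ p.support, (G.deleteEdges A).Reachable y b := by
  obtain ⟨q⟩ := h
  refine ⟨q.bypass.mapLe (G.deleteEdges_le A), (isPath_mapLe _).mpr q.bypass_isPath, ?_, ?_⟩
  · refine List.countP_eq_zero.mpr fun e he heA => ?_
    rw [edges_mapLe_eq_edges] at he
    exact (edgeSet_deleteEdges A ▸ q.bypass.edges_subset_edgeSet he).2 (by simpa using heA)
  · intro y hy
    rw [support_mapLe_eq_support] at hy
    exact ⟨q.bypass.dropUntil y hy⟩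

end DeleteEdges

end SimpleGraph

namespace TwoConnected

open SimpleGraph Walk

variable {V : Type u} {G : SimpleGraph V}

lemma exists_isPath_notMem_support (hG : TwoConnected G) {x a b : V} (ha : a ≠ x)
    (hb : b ≠ x) : ∃ p : G.Walk a b, p.IsPath ∧ x ∉ p.support := by
  classical
  obtain ⟨q⟩ := (hG.2.2 x).preconnected ⟨a, ha⟩ ⟨b, hb⟩
  set p := q.map (Embedding.induce _).toHom
  refine ⟨p.bypass, p.bypass_isPath, fun hx => ?_⟩
  obtain ⟨⟨y, hy⟩, -, hyx⟩ :=
    List.mem_map.mp (support_map _ q ▸ p.support_bypass_subset_support hx)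
  exact hy hyx

lemma exists_adj_ne (hG : TwoConnected G) {s t : V} (hst : s ≠ t) : ∃ w, G.Adj t w ∧ w ≠ s := by
  obtain ⟨z, hzt, hzs⟩ := Cardinal.exists_ne_ne_of_three_le hG.2.1 t s
  obtain ⟨p, -, hsp⟩ := hG.exists_isPath_notMem_support hst.symm hzs
  have hp : ¬ p.Nil := not_nil_of_ne hzt.symm
  exact ⟨p.snd, adj_snd hp, fun h => hsp (h ▸ List.mem_of_mem_tail (snd_mem_tail_support hp))⟩

lemma exists_isCycle_of_adj (hG : TwoConnected G) {s t : V} (h : G.Adj s t) :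
    ∃ (u : V) (c : G.Walk u u), c.IsCycle ∧ s ∈ c.support ∧ t ∈ c.support := by
  obtain ⟨w, htw, hws⟩ := hG.exists_adj_ne h.ne
  obtain ⟨r, hr, htr⟩ := hG.exists_isPath_notMem_support htw.ne' h.ne
  refine ⟨t, cons htw (r.append h.toWalk), isCycle_cons_append hr (by simp [h.ne]) htw ?_ ?_ htr,
    by simp, by simp⟩
  · intro y hyr hy
    simp only [Adj.toWalk, support_cons, support_nil, List.mem_cons, List.not_mem_nil,
      or_false] at hy
    rcases hy with rfl | rfl
    · rfl
    · exact absurd hyr htr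
  · simp [hws, htw.ne']

/-- Reroute: a path from `t` to `s` in `G - a`, stopped at its first vertex `x` on `c`, followed by
the arc of `c` from `x` to `a` through `s`, is closed up by the edge `at`. -/
lemma exists_isCycle_of_adj_of_isCycle (hG : TwoConnected G) {u s a t : V} {c : G.Walk u u}
    (hc : c.IsCycle) (hs : s ∈ c.support) (ha : a ∈ c.support) (hsa : s ≠ a) (h : G.Adj a t)
    (ht : t ∉ c.support) :
    ∃ (u' : V) (c' : G.Walk u' u'), c'.IsCycle ∧ s ∈ c'.support ∧ t ∈ c'.support := by
  classical
  obtain ⟨q, -, haq⟩ := hG.exists_isPath_notMem_support h.ne' hsa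
  obtain ⟨x, hx, r, hrq, hrc⟩ := q.exists_walk_to_first_mem (S := {y | y ∈ c.support}) hs
  have hxa : x ≠ a := fun hxa => haq (hrq (hxa ▸ r.end_mem_support))
  obtain ⟨d, hd, hsd, hdc⟩ := hc.exists_isPath_mem_support hx ha hs hxa
  have hr := r.support_bypass_subset_support
  refine ⟨a, cons h (r.bypass.append d), isCycle_cons_append r.bypass_isPath hd h
    (fun y hyr hyd => hrc y (hr hyr) (hdc hyd)) (fun htd => ht (hdc htd))
    (fun har => haq (hrq (hr har))), by simp [hsd], by simp⟩

theorem exists_isCycle_mem_support (hG : TwoConnected G) {s t : V} (hst : s ≠ t) :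
    ∃ (u : V) (c : G.Walk u u), c.IsCycle ∧ s ∈ c.support ∧ t ∈ c.support := by
  obtain ⟨p⟩ := hG.1.preconnected t s
  suffices ∀ {a : V} (p : G.Walk a s),
      a = s ∨ ∃ (u : V) (c : G.Walk u u), c.IsCycle ∧ s ∈ c.support ∧ a ∈ c.support from
    (this p).resolve_left hst.symm
  clear p hst
  intro a p
  induction p with
  | nil => exact Or.inl rfl
  | @cons a b s h p ih =>
    right
    by_cases hbs : s = b
    · subst hbs
      exact hG.exists_isCycle_of_adj h.symm
    obtain ⟨u, c, hc, hs, hb⟩ := ih.resolve_left (Ne.symm hbs)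
    by_cases ha : a ∈ c.support
    · exact ⟨u, c, hc, hs, ha⟩
    · exact hG.exists_isCycle_of_adj_of_isCycle hc hs hb hbs h.symm ha

end TwoConnected

namespace SimpleGraph.MeetsCyclesInZeroOrTwo

open Walk

variable {V : Type u} {G : SimpleGraph V} {A : Set (Sym2 V)}

lemma connectedComponentMk_ne (hA : G.MeetsCyclesInZeroOrTwo A) (hAG : A ⊆ G.edgeSet)
    {x y : V} (hxy : s(x, y) ∈ A) :
    (G.deleteEdges A).connectedComponentMk x ≠ (G.deleteEdges A).connectedComponentMk y := by
  intro h
  obtain ⟨p, hp, hpA, -⟩ := (ConnectedComponent.exact h.symm).exists_isPath_of_deleteEdges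
  have hadj : G.Adj x y := hAG hxy
  have hc : (cons hadj p).IsCycle :=
    (cons_isCycle_iff p _).mpr ⟨hp, fun he => List.countP_eq_zero.mp hpA _ he (by simpa using hxy)⟩
  have hcount := hA _ hc
  rw [edges_cons, List.countP_cons, hpA] at hcount
  simp [hxy] at hcount

lemma exists_crossing_of_isCycle (hA : G.MeetsCyclesInZeroOrTwo A) {u s t : V}
    {c : G.Walk u u} (hc : c.IsCycle) (hs : s ∈ c.support) (ht : t ∈ c.support)
    (hst : (G.deleteEdges A).connectedComponentMk s ≠ (G.deleteEdges A).connectedComponentMk t) :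
    ∃ x y, s(x, y) ∈ A ∧ (G.deleteEdges A).Reachable s x ∧ (G.deleteEdges A).Reachable y t := by
  classical
  have ht' : t ∈ (c.rotate s hs).support := (c.mem_support_rotate_iff s hs).mpr ht
  have hcount := hA _ (hc.rotate hs)
  rw [← (c.rotate s hs).take_spec ht', edges_append, List.countP_append] at hcount
  set p := (c.rotate s hs).takeUntil t ht'
  set q := (c.rotate s hs).dropUntil t ht'
  have hp : p.edges.countP (· ∈ A) ≠ 0 := fun h0 =>
    hst (ConnectedComponent.eq.mpr (p.reachable_deleteEdges_of_countP_eq_zero h0))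
  have hq : q.edges.countP (· ∈ A) ≠ 0 := fun h0 =>
    hst (ConnectedComponent.eq.mpr (q.reachable_deleteEdges_of_countP_eq_zero h0).symm)
  exact p.exists_reachable_deleteEdges_of_countP_eq_one (by omega)

lemma false_of_triangle (hA : G.MeetsCyclesInZeroOrTwo A) (hAG : A ⊆ G.edgeSet)
    {a₁ b₁ a₂ b₂ a₃ b₃ : V} (h₁ : s(a₁, b₁) ∈ A) (h₂ : s(a₂, b₂) ∈ A) (h₃ : s(a₃, b₃) ∈ A)
    (hb₁ : (G.deleteEdges A).Reachable b₁ a₂) (hb₂ : (G.deleteEdges A).Reachable b₂ a₃)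
    (hb₃ : (G.deleteEdges A).Reachable b₃ a₁) (h₁₂ : ¬(G.deleteEdges A).Reachable a₁ a₂)
    (h₂₃ : ¬(G.deleteEdges A).Reachable a₂ a₃) (h₃₁ : ¬(G.deleteEdges A).Reachable a₃ a₁) :
    False := by
  obtain ⟨p₁, hp₁, hp₁A, hp₁D⟩ := hb₁.exists_isPath_of_deleteEdges
  obtain ⟨p₂, hp₂, hp₂A, hp₂D⟩ := hb₂.exists_isPath_of_deleteEdges
  obtain ⟨p₃, hp₃, hp₃A, hp₃D⟩ := hb₃.exists_isPath_of_deleteEdges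
  have e₁ : G.Adj a₁ b₁ := hAG h₁
  have e₂ : G.Adj a₂ b₂ := hAG h₂
  have e₃ : G.Adj a₃ b₃ := hAG h₃
  have hw : (p₁.append (cons e₂ (p₂.append (cons e₃ p₃)))).IsPath := by
    simp only [isPath_def, support_append, support_cons, List.tail_cons]
    refine hp₁.support_nodup.append (hp₂.support_nodup.append hp₃.support_nodup ?_) ?_
    · exact fun y hy₂ hy₃ => h₃₁ ((hp₂D y hy₂).symm.trans (hp₃D y hy₃))
    · intro y hy₁ hy
      rcases List.mem_append.mp hy with hy₂ | hy₃
      · exact h₂₃ ((hp₁D y hy₁).symm.trans (hp₂D y hy₂))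
      · exact h₁₂ ((hp₁D y hy₁).symm.trans (hp₃D y hy₃)).symm
  have hc : (cons e₁ (p₁.append (cons e₂ (p₂.append (cons e₃ p₃))))).IsCycle :=
    isCycle_iff_isPath_tail_and_le_length.mpr ⟨by simpa using hw, by simp; omega⟩
  have hcount := hA _ hc
  simp [List.countP_append, h₁, h₂, h₃, hp₁A, hp₂A, hp₃A] at hcount

theorem eq_or_eq_of_twoConnected (hA : G.MeetsCyclesInZeroOrTwo A) (hAG : A ⊆ G.edgeSet)
    (hG : TwoConnected G) {x y : V} (hxy : s(x, y) ∈ A)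
    (c : (G.deleteEdges A).ConnectedComponent) :
    c = (G.deleteEdges A).connectedComponentMk x ∨
      c = (G.deleteEdges A).connectedComponentMk y := by
  induction c using ConnectedComponent.ind with | h z => ?_
  by_contra! hz
  obtain ⟨hzx, hzy⟩ := hz
  obtain ⟨_, c₁, hc₁, hz₁, hx₁⟩ := hG.exists_isCycle_mem_support fun h => hzx (congrArg _ h)
  obtain ⟨p, q, hpq, hzp, hqx⟩ := hA.exists_crossing_of_isCycle hc₁ hz₁ hx₁ hzx
  obtain ⟨_, c₂, hc₂, hy₂, hz₂⟩ := hG.exists_isCycle_mem_support fun h => hzy (congrArg _ h).symm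
  obtain ⟨p', q', hpq', hyp', hq'z⟩ := hA.exists_crossing_of_isCycle hc₂ hy₂ hz₂ (Ne.symm hzy)
  refine hA.false_of_triangle hAG hxy hpq' hpq hyp' (hq'z.trans hzp) hqx
    (fun h => hA.connectedComponentMk_ne hAG hxy (ConnectedComponent.eq.mpr (h.trans hyp'.symm)))
    (fun h => hzy (ConnectedComponent.eq.mpr (hzp.trans (h.symm.trans hyp'.symm))))
    (fun h => hzx (ConnectedComponent.eq.mpr (hzp.trans h)))

end SimpleGraph.MeetsCyclesInZeroOrTwo

namespace IsCircuitInjection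

open SimpleGraph Walk

variable {V : Type u} {V' : Type v} {G : SimpleGraph V} {G' : SimpleGraph V'}
  {f : G.edgeSet → G'.edgeSet}

lemma exists_mem_preimEdges (hf : IsCircuitInjection G G' f) (v : V') :
    ∃ x y, s(x, y) ∈ preimEdges G G' f (G'.incidenceSet v) := by
  obtain ⟨w, hvw⟩ := hf.2.2.2 v
  obtain ⟨⟨e, he⟩, hfe⟩ := hf.2.1 ⟨s(v, w), hvw⟩
  induction e using Sym2.ind with | h x y => ?_
  exact ⟨x, y, he, by rw [hfe]; exact ⟨hvw, Sym2.mem_mk_left v w⟩⟩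

lemma meetsCyclesInZeroOrTwo (hf : IsCircuitInjection G G' f) (v : V') :
    G.MeetsCyclesInZeroOrTwo (preimEdges G G' f (G'.incidenceSet v)) := by
  classical
  intro u c hc
  obtain ⟨u', c', hc', hcc'⟩ := hf.2.2.1 _ ⟨u, c, hc, rfl⟩
  have hl : ∀ e ∈ c.edges, e ∈ G.edgeSet := fun _ he => c.edges_subset_edgeSet he
  set l := c.edges.attachWith (· ∈ G.edgeSet) hl
  have hperm : (l.map fun e => (f e : Sym2 V')).Perm c'.edges := by
    refine (List.perm_ext_iff_of_nodup ?_ hc'.edges_nodup).mpr fun d => ?_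
    · exact (hc.edges_nodup.pmap fun _ _ _ _ => congrArg Subtype.val).map
        (Subtype.val_injective.comp hf.1)
    · have : d ∈ mapEdges G G' f {e | e ∈ c.edges} ↔ d ∈ c'.edges := by rw [hcc']; rfl
      simp only [← this, mapEdges, l, List.mem_map, List.mem_attachWith, Set.mem_ofPred_eq]
  have hcount : c.edges.countP (· ∈ preimEdges G G' f (G'.incidenceSet v)) =
      c'.edges.countP (v ∈ ·) := by
    rw [← hperm.countP_eq, List.countP_map, ← List.countP_attachWith hl]
    congr
    funext e
    simp [preimEdges, incidenceSet]
  rw [hcount]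
  exact hc'.countP_mem_edges_eq_zero_or_two v

end IsCircuitInjection

theorem statement4_general {V : Type u} {V' : Type v} (G : SimpleGraph V) (G' : SimpleGraph V')
    (h2 : TwoConnected G) (f : G.edgeSet → G'.edgeSet)
    (hf : IsCircuitInjection G G' f) (v : V') :
    ∃ c₁ c₂ : (G.deleteEdges (preimEdges G G' f (G'.incidenceSet v))).ConnectedComponent,
      c₁ ≠ c₂ ∧
      (∀ c : (G.deleteEdges (preimEdges G G' f (G'.incidenceSet v))).ConnectedComponent,
        c = c₁ ∨ c = c₂) ∧
      ∀ x y : V, s(x, y) ∈ preimEdges G G' f (G'.incidenceSet v) →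
        (G.deleteEdges (preimEdges G G' f (G'.incidenceSet v))).connectedComponentMk x ≠
          (G.deleteEdges (preimEdges G G' f (G'.incidenceSet v))).connectedComponentMk y := by
  have hA := hf.meetsCyclesInZeroOrTwo v
  have hAG : preimEdges G G' f (G'.incidenceSet v) ⊆ G.edgeSet := fun _ he => he.1
  obtain ⟨x, y, hxy⟩ := hf.exists_mem_preimEdges v
  exact ⟨_, _, hA.connectedComponentMk_ne hAG hxy, hA.eq_or_eq_of_twoConnected hAG h2 hxy,
    fun _ _ => hA.connectedComponentMk_ne hAG⟩

/-- If the preimage of a star under a circuit injection from a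
2-connected graph is independent, deleting it leaves exactly two components
and every preimage edge joins them. -/
theorem statement4 {V : Type u} {V' : Type v} (G : SimpleGraph V) (G' : SimpleGraph V')
    (h2 : TwoConnected G) (f : G.edgeSet → G'.edgeSet)
    (hf : IsCircuitInjection G G' f) (v : V')
    (hInd : IndepEdges (preimEdges G G' f (G'.incidenceSet v))) :
    ∃ c₁ c₂ : (G.deleteEdges (preimEdges G G' f (G'.incidenceSet v))).ConnectedComponent,
      c₁ ≠ c₂ ∧
      (∀ c : (G.deleteEdges (preimEdges G G' f (G'.incidenceSet v))).ConnectedComponent,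
        c = c₁ ∨ c = c₂) ∧
      ∀ x y : V, s(x, y) ∈ preimEdges G G' f (G'.incidenceSet v) →
        (G.deleteEdges (preimEdges G G' f (G'.incidenceSet v))).connectedComponentMk x ≠
          (G.deleteEdges (preimEdges G G' f (G'.incidenceSet v))).connectedComponentMk y :=
  statement4_general G G' h2 f hf v
end
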